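/- Let r be an even positive integer, S ∈ Λ_r^+, and D ∈ ℤ^{r×r} with det D ≠ 0 such that S[D^{-1}] ∈ Λ_r^+. Then the primitive Dirichlet characters associated to χ_S and to χ_{S[D^{-1}]} coincide: η_{S[D^{-1}]} = η_S. -/
import Mathlib


/-!
Common definitions for formalizing Böcherer–Kikuta,
"On p-adic Siegel–Eisenstein series II".
-/

open Complex Matrix Filter BigOperators
open scoped Classical

noncomputable section

/-- Cast an integer matrix to a rational matrix. -/
def intMapQ {a b : ℕ} (M : Matrix (Fin a) (Fin b) ℤ) : Matrix (Fin a) (Fin b) ℚ :=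
  M.map (Int.cast : ℤ → ℚ)

/-- Cast a rational matrix to a complex matrix. -/
def ratMapC {a b : ℕ} (M : Matrix (Fin a) (Fin b) ℚ) : Matrix (Fin a) (Fin b) ℂ :=
  M.map (Rat.cast : ℚ → ℂ)

/-- Cast an integer matrix to a complex matrix. -/
def intMapC {a b : ℕ} (M : Matrix (Fin a) (Fin b) ℤ) : Matrix (Fin a) (Fin b) ℂ :=
  M.map (Int.cast : ℤ → ℂ)

/-- `S[U] = Uᵀ S U`. -/
def QuadAction {r s : ℕ} (S : Matrix (Fin r) (Fin r) ℚ) (U : Matrix (Fin r) (Fin s) ℚ) :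
    Matrix (Fin s) (Fin s) ℚ := Uᵀ * S * U

/-- A rational symmetric matrix is half-integral (`T ∈ Λ_n`) if its diagonal entries are
integers and its offdiagonal entries have integral doubles. -/
def IsHalfIntegral {n : ℕ} (T : Matrix (Fin n) (Fin n) ℚ) : Prop :=
  T.IsSymm ∧ (∀ i, ∃ z : ℤ, T i i = z) ∧ ∀ i j, ∃ z : ℤ, 2 * T i j = z

/-- `Λ_n^{≥0}`: positive semidefinite half-integral matrices, the index set of Fourier
expansions of Siegel modular forms. -/
def PSDHalfIntegral (n : ℕ) : Set (Matrix (Fin n) (Fin n) ℚ) :=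
  {T | IsHalfIntegral T ∧ T.PosSemidef}

/-- The Siegel upper half space of degree `n`. -/
def SiegelUpperHalf (n : ℕ) : Set (Matrix (Fin n) (Fin n) ℂ) :=
  {Z | Z.IsSymm ∧ (Z.map Complex.im).PosDef}

/-- The Fourier "q-term" `e^{2 π i tr(T Z)}`. -/
def fourierTerm {n : ℕ} (T : Matrix (Fin n) (Fin n) ℚ) (Z : Matrix (Fin n) (Fin n) ℂ) : ℂ :=
  Complex.exp (2 * (Real.pi : ℂ) * Complex.I * (ratMapC T * Z).trace)

/-- Membership in `Γ_0^{(n)}(N)`: an integral symplectic matrix whose lower left block is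
divisible by `N`. -/
def InGamma0 (n N : ℕ) (g : Matrix (Fin n ⊕ Fin n) (Fin n ⊕ Fin n) ℤ) : Prop :=
  g ∈ Matrix.symplecticGroup (Fin n) ℤ ∧ ∀ i j, (N : ℤ) ∣ g.toBlocks₂₁ i j

/-- Möbius (generalized fractional linear) action `g⟨Z⟩ = (AZ+B)(CZ+D)⁻¹` of an integral
symplectic matrix on the Siegel upper half space. -/
def siegelAction {n : ℕ} (g : Matrix (Fin n ⊕ Fin n) (Fin n ⊕ Fin n) ℤ)
    (Z : Matrix (Fin n) (Fin n) ℂ) : Matrix (Fin n) (Fin n) ℂ :=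
  (intMapC g.toBlocks₁₁ * Z + intMapC g.toBlocks₁₂) *
    (intMapC g.toBlocks₂₁ * Z + intMapC g.toBlocks₂₂)⁻¹

/-- A Siegel modular form of degree `n`, weight `k`, level `N` and character `χ`, recorded
together with its Fourier coefficients `coeff T` (supported on `T ∈ Λ_n`, `T ≥ 0`). -/
structure SiegelModularForm (n k N : ℕ) (χ : DirichletCharacter ℂ N) where
  toFun : Matrix (Fin n) (Fin n) ℂ → ℂ
  coeff : Matrix (Fin n) (Fin n) ℚ → ℂ
  coeff_supported : ∀ T, coeff T ≠ 0 → T ∈ PSDHalfIntegral n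
  expansion : ∀ Z ∈ SiegelUpperHalf n,
    HasSum (fun T : PSDHalfIntegral n => coeff T.1 * fourierTerm T.1 Z) (toFun Z)
  transform : ∀ g, InGamma0 n N g → ∀ Z ∈ SiegelUpperHalf n,
    toFun (siegelAction g Z) =
      χ ((g.toBlocks₂₂.det : ZMod N)) *
        (intMapC g.toBlocks₂₁ * Z + intMapC g.toBlocks₂₂).det ^ k * toFun Z

/-- `D ~ D'` iff `D' = U D` for some `U ∈ GL_r(ℤ)`; `Quot` of this relation is the left
coset space `GL_r(ℤ) \ M_r(ℤ)`. -/
def leftUnimodRel (r : ℕ) (D D' : Matrix (Fin r) (Fin r) ℤ) : Prop :=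
  ∃ u : (Matrix (Fin r) (Fin r) ℤ)ˣ, D' = (u : Matrix (Fin r) (Fin r) ℤ) * D

/-- `S ~ S'` iff `S' = S[U]` for some `U ∈ GL_r(ℤ)` (unimodular equivalence of quadratic
forms); `Quot` of this relation is `Λ_r / GL_r(ℤ)` (on half-integral matrices). -/
def unimodularCongruent (r : ℕ) (S S' : Matrix (Fin r) (Fin r) ℚ) : Prop :=
  ∃ u : (Matrix (Fin r) (Fin r) ℤ)ˣ, S' = QuadAction S (intMapQ (u : Matrix (Fin r) (Fin r) ℤ))

/-- `ε(S)`: the number of units `U ∈ GL_r(ℤ)` with `S[U] = S`. -/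
def eps {r : ℕ} (S : Matrix (Fin r) (Fin r) ℚ) : ℕ :=
  Nat.card {u : (Matrix (Fin r) (Fin r) ℤ)ˣ //
    QuadAction S (intMapQ (u : Matrix (Fin r) (Fin r) ℤ)) = S}

/-- The representation number `r_S(T) = #{X ∈ ℤ^{r×n} : S[X] = T}`, i.e. the `T`-th Fourier
coefficient of the theta series `θ_S^{(n)}`. -/
def repNum {r n : ℕ} (S : Matrix (Fin r) (Fin r) ℚ) (T : Matrix (Fin n) (Fin n) ℚ) : ℕ :=
  Nat.card {X : Matrix (Fin r) (Fin n) ℤ // QuadAction S (intMapQ X) = T}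

/-- `T ⊕ 0_{n-r}` for `T` of size `r ≤ n`. -/
def padBlock {n r : ℕ} (_h : r ≤ n) (T : Matrix (Fin r) (Fin r) ℚ) :
    Matrix (Fin n) (Fin n) ℚ :=
  Matrix.of fun i j =>
    if hi : (i : ℕ) < r then if hj : (j : ℕ) < r then T ⟨i, hi⟩ ⟨j, hj⟩ else 0 else 0

/-- `astar` is the system of rank-`r` primitive Fourier coefficients of a Fourier coefficient
function `a` on `Λ_n`: it is `GL_r(ℤ)`-invariant and satisfies the inversion relations
`a(T ⊕ 0) = ∑_{D ∈ GL_r(ℤ)\{D : det D ≠ 0, T[D⁻¹] ∈ Λ_r^+}} astar(T[D⁻¹])` for all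
`T ∈ Λ_r^+`, the sum being over the cosets (encoded by a function `f` on the coset space). -/
def IsPrimitiveCoeffs {α : Type} [Field α] {n r : ℕ} (hrn : r ≤ n)
    (a : Matrix (Fin n) (Fin n) ℚ → α) (astar : Matrix (Fin r) (Fin r) ℚ → α) : Prop :=
  (∀ (S : Matrix (Fin r) (Fin r) ℚ) (u : (Matrix (Fin r) (Fin r) ℤ)ˣ),
      astar (QuadAction S (intMapQ (u : Matrix (Fin r) (Fin r) ℤ))) = astar S) ∧
  ∀ T : Matrix (Fin r) (Fin r) ℚ, IsHalfIntegral T → T.PosDef →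
    ∃ f : Quot (leftUnimodRel r) → α,
      (∀ D : Matrix (Fin r) (Fin r) ℤ,
        f (Quot.mk _ D) =
          if (intMapQ D).det ≠ 0 ∧ IsHalfIntegral (QuadAction T (intMapQ D)⁻¹) ∧
              (QuadAction T (intMapQ D)⁻¹).PosDef
          then astar (QuadAction T (intMapQ D)⁻¹) else 0) ∧
      a (padBlock hrn T) = ∑ᶠ q, f q

/-- The defining left cosets for the Siegel–Eisenstein series: `g ~ γ g` for
`γ ∈ Γ_∞^{(n)}` (integral symplectic with `C = 0`). -/
def eisRel (n : ℕ)
    (g g' : {g : Matrix (Fin n ⊕ Fin n) (Fin n ⊕ Fin n) ℤ //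
      g ∈ Matrix.symplecticGroup (Fin n) ℤ}) : Prop :=
  ∃ γ : Matrix (Fin n ⊕ Fin n) (Fin n ⊕ Fin n) ℤ,
    γ ∈ Matrix.symplecticGroup (Fin n) ℤ ∧ γ.toBlocks₂₁ = 0 ∧ g'.1 = γ * g.1

/-- `F` is the Siegel–Eisenstein series of degree `n` and weight `k`:
`F(Z) = ∑_{(C,D)} det(CZ+D)^{-k}`, the sum over `Γ_∞^{(n)} \ Γ_n` (encoded by a function on
the coset space). -/
def IsEisensteinSeries (n k : ℕ) (F : Matrix (Fin n) (Fin n) ℂ → ℂ) : Prop :=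
  ∃ f : Quot (eisRel n) → Matrix (Fin n) (Fin n) ℂ → ℂ,
    (∀ (g : {g : Matrix (Fin n ⊕ Fin n) (Fin n ⊕ Fin n) ℤ //
        g ∈ Matrix.symplecticGroup (Fin n) ℤ}) (Z : Matrix (Fin n) (Fin n) ℂ),
      f (Quot.mk _ g) Z =
        ((intMapC g.1.toBlocks₂₁ * Z + intMapC g.1.toBlocks₂₂).det)⁻¹ ^ k) ∧
    ∀ Z ∈ SiegelUpperHalf n, HasSum (fun q => f q Z) (F Z)

/-- `a` is the (rational) Fourier coefficient function `a_k^{(n)}(·)` of the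
Siegel–Eisenstein series of degree `n` and weight `k`. -/
def IsEisensteinCoeffs (n k : ℕ) (a : Matrix (Fin n) (Fin n) ℚ → ℚ) : Prop :=
  ∃ F : Matrix (Fin n) (Fin n) ℂ → ℂ, IsEisensteinSeries n k F ∧
    (∀ T, a T ≠ 0 → T ∈ PSDHalfIntegral n) ∧
    ∀ Z ∈ SiegelUpperHalf n,
      HasSum (fun T : PSDHalfIntegral n => (a T.1 : ℂ) * fourierTerm T.1 Z) (F Z)

/-- `level(S)`: the smallest positive integer `ℓ` such that `ℓ (2S)⁻¹ ∈ 2Λ_r`. -/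
def QLevel {r : ℕ} (S : Matrix (Fin r) (Fin r) ℚ) : ℕ :=
  sInf {ℓ : ℕ | 0 < ℓ ∧ ∃ T : Matrix (Fin r) (Fin r) ℚ, IsHalfIntegral T ∧
    (ℓ : ℚ) • ((2 : ℚ) • S)⁻¹ = (2 : ℚ) • T}

/-- The statement `χ_S = χ_p^j` for `S ∈ Λ_r^+` (`r` even): the quadratic characters
`d ↦ ((-1)^{r/2} det(2S) / d)` (Kronecker–Jacobi symbol) and `d ↦ (d/p)^j` agree; it
suffices to compare them at odd positive `d` prime to `p`. -/
def ChiCondition (r p j : ℕ) (S : Matrix (Fin r) (Fin r) ℚ) : Prop :=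
  ∀ d : ℕ, Odd d → Nat.Coprime d p →
    jacobiSym ((-1) ^ (r / 2) * (((2 : ℚ) • S).det).num) d = (jacobiSym (d : ℤ) p) ^ j

/-- `x ∈ ℤ_(p)`, expressed via the `p`-adic valuation of the rational number `x`. -/
def IsPadicInt (p : ℕ) (x : ℚ) : Prop := x = 0 ∨ 0 ≤ padicValRat p x

/-- `x ≡ y mod p^c` for rational `x, y ∈ ℤ_(p)`, i.e. `v_p(x - y) ≥ c`. -/
def PadicCong (p : ℕ) (c : ℤ) (x y : ℚ) : Prop := x = y ∨ c ≤ padicValRat p (x - y)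

/-- `S` and `S'` lie in the same genus: they are congruent over `ℤ_q` for every prime `q`
(both being positive definite, no condition at the infinite place is needed). -/
def SameGenus {r : ℕ} (S S' : Matrix (Fin r) (Fin r) ℚ) : Prop :=
  ∀ (q : ℕ) [Fact q.Prime], ∃ U : (Matrix (Fin r) (Fin r) ℤ_[q])ˣ,
    S'.map (Rat.cast : ℚ → ℚ_[q]) =
      (((U : Matrix (Fin r) (Fin r) ℤ_[q]).map ((↑) : ℤ_[q] → ℚ_[q])))ᵀ *
        S.map (Rat.cast : ℚ → ℚ_[q]) *
        ((U : Matrix (Fin r) (Fin r) ℤ_[q]).map ((↑) : ℤ_[q] → ℚ_[q]))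

end

lemma halfIntegral_exists_int {n : ℕ} {T : Matrix (Fin n) (Fin n) ℚ} (h : IsHalfIntegral T) :
    ∃ M : Matrix (Fin n) (Fin n) ℤ, intMapQ M = (2 : ℚ) • T := by
  choose M hM using h.2.2
  exact ⟨Matrix.of M, by ext i j; simp [intMapQ, ← hM i j, Matrix.smul_apply]⟩

lemma intMapQ_det {n : ℕ} (M : Matrix (Fin n) (Fin n) ℤ) :
    (intMapQ M).det = (M.det : ℚ) :=
  (RingHom.map_det (Int.castRingHom ℚ) M).symm

set_option synthInstance.maxHeartbeats 1000000 in
/-- For `r` even, `S ∈ Λ_r^+` and `D` integral with `det D ≠ 0` and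
`S' = S[D⁻¹] ∈ Λ_r^+`, the primitive characters associated to `χ_S` and `χ_{S'}`
coincide; equivalently, the Kronecker–Jacobi symbols `((-1)^{r/2} det 2S / d)` and
`((-1)^{r/2} det 2S' / d)` agree for every odd `d` prime to both discriminants. -/
theorem statement7 (r : ℕ) (hr : 0 < r) (hre : Even r)
    (S : Matrix (Fin r) (Fin r) ℚ) (hS : IsHalfIntegral S) (hSpos : S.PosDef)
    (D : Matrix (Fin r) (Fin r) ℤ) (hD : (intMapQ D).det ≠ 0)
    (S' : Matrix (Fin r) (Fin r) ℚ) (hS'def : S' = QuadAction S (intMapQ D)⁻¹)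
    (hS' : IsHalfIntegral S') (hS'pos : S'.PosDef) :
    ∀ d : ℕ, Odd d →
      IsCoprime (d : ℤ) ((((2 : ℚ) • S).det).num * (((2 : ℚ) • S').det).num) →
      jacobiSym ((-1) ^ (r / 2) * (((2 : ℚ) • S).det).num) d =
        jacobiSym ((-1) ^ (r / 2) * (((2 : ℚ) • S').det).num) d := by
  obtain ⟨M, hM⟩ := halfIntegral_exists_int hS
  obtain ⟨M', hM'⟩ := halfIntegral_exists_int hS'
  have hsmul : ((2 : ℚ) • S') = ((intMapQ D)⁻¹)ᵀ * ((2 : ℚ) • S) * (intMapQ D)⁻¹ := by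
    rw [hS'def]
    simp [QuadAction, Matrix.mul_smul, Matrix.smul_mul]
  have hdetQ : ((2 : ℚ) • S).det = ((2 : ℚ) • S').det * ((intMapQ D).det) ^ 2 := by
    rw [hsmul, Matrix.det_mul, Matrix.det_mul, Matrix.det_transpose,
      Matrix.det_nonsing_inv, Ring.inverse_eq_inv]
    have e1 : (intMapQ D).det⁻¹ * ((2 : ℚ) • S).det * (intMapQ D).det⁻¹ *
        (intMapQ D).det ^ 2 = ((2 : ℚ) • S).det * ((intMapQ D).det⁻¹ * (intMapQ D).det) *
        ((intMapQ D).det⁻¹ * (intMapQ D).det) := by ring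
    rw [e1, inv_mul_cancel₀ hD, mul_one, mul_one]
  have hdetZ : M.det = M'.det * D.det ^ 2 := by
    have : (M.det : ℚ) = (M'.det : ℚ) * (D.det : ℚ) ^ 2 := by
      rw [← intMapQ_det, ← intMapQ_det, hM, hM', hdetQ, intMapQ_det]
    exact_mod_cast this
  intro d hd hcop
  rw [← hM, ← hM', intMapQ_det, intMapQ_det, Rat.num_intCast, Rat.num_intCast] at *
  rw [hdetZ] at hcop ⊢
  have hcop2 : IsCoprime (d : ℤ) (D.det ^ 2) :=
    (hcop.of_isCoprime_of_dvd_right (dvd_mul_right _ _)).of_isCoprime_of_dvd_right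
      (dvd_mul_left _ _)
  rw [← mul_assoc, jacobiSym.mul_left, jacobiSym.sq_one' (by
    have := Int.isCoprime_iff_gcd_eq_one.mp (hcop2.of_isCoprime_of_dvd_right
      (dvd_pow_self _ two_ne_zero))
    rwa [Int.gcd_comm] at this), mul_one]
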